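/- Let 0 < p < 1, let R₁, R₂ : ℝ → ℂ be measurable with ∫|R₁ - R₂|^p dx < ∞, let m ≥ 1, and let β(x) = e^{iθ(x)} with θ(x) ∈ (-π,π) as for the Cayley transform. Define for φ ∈ ℝ: R(x,φ) = R₁(x) - β(x)^m (R₁(x) - R₂(x)) / (β(x)^m - e^{iφ}). Then ∫_{-π}^{π} ∫_ℝ |R(x,φ) - R₁(x)|^p dx dφ ≤ (2^{1-p}π/(1-p)) ∫_ℝ |R₁(x) - R₂(x)|^p dx, and hence there exists φ ∈ [-π, π] with ∫_ℝ |R(x,φ) - R₁(x)|^p dx ≤ (2^{-p}/(1-p)) ∫_ℝ |R₁(x) - R₂(x)|^p dx. -/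

import Mathlib

open Real MeasureTheory

noncomputable def wfn (p : ℝ) (t : ℝ) : ℝ :=
    ‖1 - Complex.exp (Complex.I * t)‖ ^ (-p)

lemma aux_abs (t : ℝ) :
    ‖1 - Complex.exp (Complex.I * t)‖ = 2 * |Real.sin (t / 2)| := by
  rw [mul_comm Complex.I, Complex.exp_mul_I]
  have : (1 : ℂ) - (Complex.cos t + Complex.sin t * Complex.I)
      = ((1 - Real.cos t : ℝ) : ℂ) + ((-Real.sin t : ℝ)) * Complex.I := by
    push_cast; ring
  rw [this, Complex.norm_add_mul_I]
  have h : (1 - Real.cos t) ^ 2 + (-Real.sin t) ^ 2 = (2 * |Real.sin (t/2)|) ^ 2 := by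
    have h1 : Real.sin t ^ 2 + Real.cos t ^ 2 = 1 := Real.sin_sq_add_cos_sq t
    have h2 : Real.sin (t/2) ^ 2 = 2⁻¹ - Real.cos t / 2 := by
      have := Real.sin_sq_eq_half_sub (t/2)
      rw [show 2 * (t/2) = t by ring] at this; linarith [this]
    have h3 : |Real.sin (t/2)| ^ 2 = Real.sin (t/2) ^ 2 := sq_abs _
    nlinarith
  rw [h, Real.sqrt_sq (by positivity)]

lemma wfn_nonneg (p t : ℝ) : 0 ≤ wfn p t := Real.rpow_nonneg (by positivity) _

lemma wfn_measurable (p : ℝ) : Measurable (wfn p) := by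
  have hb : Measurable fun t : ℝ => ‖1 - Complex.exp (Complex.I * t)‖ :=
    (continuous_norm.comp
      (continuous_const.sub (Complex.continuous_exp.comp
        (continuous_const.mul Complex.continuous_ofReal)))).measurable
  exact (by measurability : Measurable fun y : ℝ => y ^ (-p)).comp hb

lemma wfn_periodic (p : ℝ) : Function.Periodic (wfn p) (2 * π) := by
  intro t
  unfold wfn
  congr 2
  rw [show ((↑(t + 2 * π) : ℂ)) = (t : ℂ) + 2 * π by push_cast; ring]
  rw [mul_add, Complex.exp_add]
  rw [show Complex.I * (2 * ↑π) = 2 * ↑π * Complex.I by ring, Complex.exp_two_pi_mul_I, mul_one]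

lemma aux_sin_lb {t : ℝ} (ht : t ∈ Set.Icc (-π) π) :
    2 / π * |t| ≤ 2 * |Real.sin (t / 2)| := by
  obtain ⟨htl, htr⟩ := ht
  have hπ := Real.pi_pos
  have h : ∀ s : ℝ, 0 ≤ s → s ≤ π → 2 / π * s ≤ 2 * Real.sin (s / 2) := by
    intro s h0 h1
    have := Real.mul_le_sin (x := s / 2) (by linarith) (by linarith)
    calc 2 / π * s = 2 * (2 / π * (s / 2)) := by ring
    _ ≤ 2 * Real.sin (s / 2) := by linarith
  rcases le_total 0 t with h0 | h0
  · have h1 := h t h0 htr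
    rwa [abs_of_nonneg h0,
      abs_of_nonneg (Real.sin_nonneg_of_nonneg_of_le_pi (by linarith) (by linarith))]
  · have h1 := h (-t) (by linarith) (by linarith)
    rw [abs_of_nonpos h0]
    have hs : |Real.sin (t / 2)| = Real.sin (-t / 2) := by
      rw [show t / 2 = -(-t / 2) by ring, Real.sin_neg, abs_neg,
        abs_of_nonneg (Real.sin_nonneg_of_nonneg_of_le_pi (by linarith) (by linarith))]
    rw [hs]
    linarith [h1, (by ring : 2 / π * -t = 2 / π * (-t))]

lemma wfn_le {p : ℝ} (hp0 : 0 < p) {t : ℝ} (ht : t ∈ Set.Icc (-π) π) :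
    wfn p t ≤ (2 / π) ^ (-p) * |t| ^ (-p) := by
  have hπ := Real.pi_pos
  rcases eq_or_ne t 0 with rfl | ht0
  · unfold wfn
    simp only [Complex.ofReal_zero, mul_zero, Complex.exp_zero, sub_self, norm_zero]
    rw [Real.zero_rpow (by linarith : -p ≠ 0)]
    positivity
  · have habs : 0 < |t| := abs_pos.mpr ht0
    have hlb : 2 / π * |t| ≤ ‖1 - Complex.exp (Complex.I * t)‖ := by
      rw [aux_abs]; exact aux_sin_lb ht
    have h1 : wfn p t ≤ (2 / π * |t|) ^ (-p) :=
      Real.rpow_le_rpow_of_nonpos (by positivity) hlb (by linarith)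
    calc wfn p t ≤ (2 / π * |t|) ^ (-p) := h1
    _ = (2 / π) ^ (-p) * |t| ^ (-p) := Real.mul_rpow (by positivity) (abs_nonneg t)

lemma abs_int {p : ℝ} (hp0 : 0 < p) (hp1 : p < 1) :
    IntervalIntegrable (fun t : ℝ => |t| ^ (-p)) volume (-π) π ∧
    (∫ t in (-π)..π, |t| ^ (-p)) = 2 * π ^ (1 - p) / (1 - p) := by
  have hπ := Real.pi_pos
  have hi0 : IntervalIntegrable (fun t : ℝ => |t| ^ (-p)) volume 0 π := by
    have h := intervalIntegral.intervalIntegrable_rpow'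
      (show (-1 : ℝ) < -p by linarith) (a := 0) (b := π)
    rw [intervalIntegrable_iff] at h ⊢
    refine h.congr_fun ?_ measurableSet_uIoc
    intro x hx
    rw [Set.uIoc_of_le hπ.le] at hx
    simp only
    rw [abs_of_pos hx.1]
  have hi1 : IntervalIntegrable (fun t : ℝ => |t| ^ (-p)) volume (-π) 0 := by
    rw [IntervalIntegrable.iff_comp_neg]
    simpa [abs_neg] using hi0.symm
  have hval0 : (∫ t in (0:ℝ)..π, |t| ^ (-p)) = π ^ (1 - p) / (1 - p) := by
    have heq : (∫ t in (0:ℝ)..π, |t| ^ (-p)) = ∫ t in (0:ℝ)..π, t ^ (-p) := by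
      apply intervalIntegral.integral_congr
      intro x hx
      rw [Set.uIcc_of_le hπ.le] at hx
      rcases eq_or_ne x 0 with rfl | hx0
      · simp
      · simp only
        rw [abs_of_pos (lt_of_le_of_ne hx.1 (Ne.symm hx0))]
    rw [heq, integral_rpow (Or.inl (by linarith))]
    rw [Real.zero_rpow (by linarith : -p + 1 ≠ 0)]
    rw [show -p + 1 = 1 - p by ring]
    ring
  have hval1 : (∫ t in (-π)..(0:ℝ), |t| ^ (-p)) = π ^ (1 - p) / (1 - p) := by
    have h := intervalIntegral.integral_comp_neg (a := (0:ℝ)) (b := π)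
      (fun t : ℝ => |t| ^ (-p))
    simp only [abs_neg, neg_zero] at h
    rw [← h, hval0]
  constructor
  · exact hi1.trans hi0
  · rw [← intervalIntegral.integral_add_adjacent_intervals hi1 hi0, hval0, hval1]; ring

lemma wfn_intervalIntegrable {p : ℝ} (hp0 : 0 < p) (hp1 : p < 1) :
    IntervalIntegrable (wfn p) volume (-π) π := by
  have hπ := Real.pi_pos
  obtain ⟨hvi, -⟩ := abs_int hp0 hp1
  rw [intervalIntegrable_iff] at hvi ⊢
  apply Integrable.mono' (hvi.const_mul ((2 / π) ^ (-p)))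
  · exact (wfn_measurable p).aestronglyMeasurable
  · rw [Set.uIoc_of_le (by linarith : -π ≤ π)]
    filter_upwards [ae_restrict_mem measurableSet_Ioc] with t ht
    rw [Real.norm_eq_abs, abs_of_nonneg (wfn_nonneg p t)]
    exact wfn_le hp0 ⟨ht.1.le, ht.2⟩

lemma wfn_integral_le {p : ℝ} (hp0 : 0 < p) (hp1 : p < 1) :
    (∫ t in (-π)..π, wfn p t) ≤ 2 ^ (1 - p) * π / (1 - p) := by
  have hπ := Real.pi_pos
  obtain ⟨hvi, hval⟩ := abs_int hp0 hp1
  have hmono : (∫ t in (-π)..π, wfn p t)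
      ≤ ∫ t in (-π)..π, (2 / π) ^ (-p) * |t| ^ (-p) := by
    apply intervalIntegral.integral_mono_on (by linarith)
      (wfn_intervalIntegrable hp0 hp1) (hvi.const_mul _)
    intro x hx
    exact wfn_le hp0 hx
  have hval2 : (∫ t in (-π)..π, (2 / π) ^ (-p) * |t| ^ (-p))
      = 2 ^ (1 - p) * π / (1 - p) := by
    rw [intervalIntegral.integral_const_mul, hval]
    have e1 : ((2 : ℝ) / π) ^ (-p) = 2 ^ (-p) / π ^ (-p) :=
      Real.div_rpow (by norm_num) hπ.le _
    have e2 : (π : ℝ) ^ (1 - p) = π * π ^ (-p) := by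
      rw [show (1 : ℝ) - p = 1 + -p by ring, Real.rpow_add hπ, Real.rpow_one]
    have e3 : (2 : ℝ) ^ (1 - p) = 2 * 2 ^ (-p) := by
      rw [show (1 : ℝ) - p = 1 + -p by ring, Real.rpow_add (by norm_num), Real.rpow_one]
    have hπp : (0 : ℝ) < π ^ (-p) := Real.rpow_pos_of_pos hπ _
    have h1p : (1 : ℝ) - p ≠ 0 := by linarith
    rw [e1, e2, e3]
    field_simp
  linarith

lemma periodic_intervalIntegrable {f : ℝ → ℝ} (hf : Function.Periodic f (2 * π))
    (h : IntervalIntegrable f volume (-π) π) (a b : ℝ) :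
    IntervalIntegrable f volume a b := by
  have hπ := Real.pi_pos
  have step1 : ∀ k : ℤ, IntervalIntegrable f volume (2 * π * k - π) (2 * π * k + π) := by
    intro k
    have h2 := h.comp_sub_right ((k : ℝ) * (2 * π))
    have he : (fun x => f (x - (k : ℝ) * (2 * π))) = f := by
      funext x
      exact hf.sub_int_mul_eq k
    rw [he] at h2
    convert h2 using 1 <;> ring
  have step2 : ∀ n : ℕ, ∀ k : ℤ, IntervalIntegrable f volume
      (2 * π * k - π) (2 * π * (k + n) + π) := by
    intro n
    induction n with
    | zero => intro k; simpa using step1 k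
    | succ n ih =>
      intro k
      have h1 := ih k
      have h2 := step1 (k + n + 1)
      have he : (2 : ℝ) * π * ((k : ℝ) + (n : ℝ)) + π = 2 * π * ((k + (n : ℤ) + 1 : ℤ) : ℝ) - π := by
        push_cast; ring
      rw [he] at h1
      have h3 := h1.trans h2
      convert h3 using 2
      push_cast; ring
  -- general case
  set c := min a b with hc
  set d := max a b with hd
  set k : ℤ := ⌊(c + π) / (2 * π)⌋ with hk
  have h2π : (0 : ℝ) < 2 * π := by linarith
  have hkc : 2 * π * k - π ≤ c := by
    have h1 := Int.floor_le ((c + π) / (2 * π))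
    have h2 : 2 * π * (k : ℝ) ≤ 2 * π * ((c + π) / (2 * π)) :=
      mul_le_mul_of_nonneg_left h1 h2π.le
    have h3 : 2 * π * ((c + π) / (2 * π)) = c + π := by field_simp
    linarith
  set n : ℕ := (⌈(d - 2 * π * k) / (2 * π)⌉).toNat with hn
  have hnd : d ≤ 2 * π * ((k : ℝ) + (n : ℝ)) + π := by
    have h1 : ((d - 2 * π * k) / (2 * π)) ≤ ((⌈(d - 2 * π * k) / (2 * π)⌉ : ℤ) : ℝ) :=
      Int.le_ceil _
    have h2 : ((⌈(d - 2 * π * k) / (2 * π)⌉ : ℤ) : ℝ) ≤ ((n : ℤ) : ℝ) := by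
      exact_mod_cast Int.self_le_toNat _
    have h3 : (d - 2 * π * k) ≤ 2 * π * (n : ℝ) := by
      have h4 : 2 * π * ((d - 2 * π * k) / (2 * π)) ≤ 2 * π * (n : ℝ) :=
        mul_le_mul_of_nonneg_left (h1.trans h2) h2π.le
      have h5 : 2 * π * ((d - 2 * π * k) / (2 * π)) = d - 2 * π * k := by field_simp
      linarith
    push_cast
    push_cast at h3
    linarith
  refine (step2 n k).mono_set ?_
  have hcd : c ≤ d := min_le_max
  have hend : 2 * π * (k : ℝ) - π ≤ 2 * π * ((k : ℝ) + (n : ℝ)) + π := by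
    have : (0 : ℝ) ≤ 2 * π * n := by positivity
    linarith
  rw [Set.uIcc_of_le hend]
  have huicc : Set.uIcc a b = Set.Icc c d := rfl
  rw [huicc]
  apply Set.Icc_subset_Icc
  · push_cast; push_cast at hkc; linarith
  · push_cast; push_cast at hnd; linarith

lemma wfn_shift {p : ℝ} (hp0 : 0 < p) (hp1 : p < 1) (α : ℝ) :
    IntervalIntegrable (fun φ => wfn p (φ - α)) volume (-π) π ∧
    (∫ φ in (-π)..π, wfn p (φ - α)) = ∫ t in (-π)..π, wfn p t := by
  have hall := periodic_intervalIntegrable (wfn_periodic p) (wfn_intervalIntegrable hp0 hp1)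
  constructor
  · have h := (hall (-π - α) (π - α)).comp_sub_right α
    convert h using 1 <;> ring
  · rw [intervalIntegral.integral_comp_sub_right (fun t => wfn p t) α]
    have h := (wfn_periodic p).intervalIntegral_add_eq (-π - α) (-π)
    rw [show -π - α + 2 * π = π - α by ring, show -π + 2 * π = π by ring] at h
    exact h

theorem stmt10 (p : ℝ) (hp0 : 0 < p) (hp1 : p < 1) (R₁ R₂ : ℝ → ℂ)
    (hm₁ : Measurable R₁) (hm₂ : Measurable R₂)
    (hint : Integrable (fun x => ‖R₁ x - R₂ x‖ ^ p))
    (m : ℕ) (hm : 1 ≤ m) (θ : ℝ → ℝ) (hθmeas : Measurable θ)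
    (hθ : ∀ x, θ x ∈ Set.Ioo (-π) π) :
    (∫ φ in (-π)..π, ∫ x : ℝ,
        ‖(R₁ x - Complex.exp (Complex.I * θ x) ^ m * (R₁ x - R₂ x) /
            (Complex.exp (Complex.I * θ x) ^ m - Complex.exp (Complex.I * φ))) - R₁ x‖ ^ p)
      ≤ 2 ^ (1 - p) * π / (1 - p) * ∫ x : ℝ, ‖R₁ x - R₂ x‖ ^ p ∧
    ∃ φ ∈ Set.Icc (-π) π,
      (∫ x : ℝ,
          ‖(R₁ x - Complex.exp (Complex.I * θ x) ^ m * (R₁ x - R₂ x) /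
              (Complex.exp (Complex.I * θ x) ^ m - Complex.exp (Complex.I * φ))) - R₁ x‖ ^ p)
        ≤ 2 ^ (-p) / (1 - p) * ∫ x : ℝ, ‖R₁ x - R₂ x‖ ^ p := by
  have hπ := Real.pi_pos
  have hππ : -π ≤ π := by linarith
  set u : ℝ → ℝ := fun x => ‖R₁ x - R₂ x‖ ^ p with hu
  set α : ℝ → ℝ := fun x => (m : ℝ) * θ x with hα
  have key : ∀ (φ x : ℝ),
      ‖(R₁ x - Complex.exp (Complex.I * θ x) ^ m * (R₁ x - R₂ x) /
          (Complex.exp (Complex.I * θ x) ^ m - Complex.exp (Complex.I * φ))) - R₁ x‖ ^ p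
      = u x * wfn p (φ - α x) := by
    intro φ x
    have hc : Complex.exp (Complex.I * θ x) ^ m
        = Complex.exp (Complex.I * ((α x : ℝ) : ℂ)) := by
      rw [← Complex.exp_nat_mul]
      congr 1
      simp only [hα]
      push_cast
      ring
    have habs1 : ‖Complex.exp (Complex.I * ((α x : ℝ) : ℂ))‖ = 1 := by
      rw [mul_comm]; exact Complex.norm_exp_ofReal_mul_I _
    have hd : ‖Complex.exp (Complex.I * ((α x : ℝ) : ℂ)) - Complex.exp (Complex.I * φ)‖
        = ‖1 - Complex.exp (Complex.I * ((φ - α x : ℝ) : ℂ))‖ := by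
      have heq : Complex.exp (Complex.I * ((α x : ℝ) : ℂ)) - Complex.exp (Complex.I * φ)
          = Complex.exp (Complex.I * ((α x : ℝ) : ℂ)) *
            (1 - Complex.exp (Complex.I * ((φ - α x : ℝ) : ℂ))) := by
        rw [mul_sub, mul_one, ← Complex.exp_add]
        congr 2
        push_cast
        ring
      rw [heq, norm_mul, habs1, one_mul]
    rw [show (R₁ x - Complex.exp (Complex.I * θ x) ^ m * (R₁ x - R₂ x) /
          (Complex.exp (Complex.I * θ x) ^ m - Complex.exp (Complex.I * φ))) - R₁ x
        = -(Complex.exp (Complex.I * θ x) ^ m * (R₁ x - R₂ x) /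
          (Complex.exp (Complex.I * θ x) ^ m - Complex.exp (Complex.I * φ))) by ring]
    rw [norm_neg, norm_div, norm_mul, hc, habs1, one_mul, hd]
    rw [Real.div_rpow (norm_nonneg _) (norm_nonneg _), div_eq_mul_inv,
      ← Real.rpow_neg (norm_nonneg _)]
    rfl
  simp only [key]
  set W := ∫ t in (-π)..π, wfn p t with hW
  set A := ∫ x : ℝ, u x with hA
  have hA0 : 0 ≤ A := integral_nonneg fun x => Real.rpow_nonneg (norm_nonneg _) _
  set μ : Measure ℝ := volume.restrict (Set.Ioc (-π) π) with hμ
  have hμuniv : μ Set.univ = ENNReal.ofReal (2 * π) := by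
    rw [hμ, Measure.restrict_apply_univ, Real.volume_Ioc]
    congr 1; ring
  have hfin : IsFiniteMeasure μ := ⟨by rw [hμuniv]; exact ENNReal.ofReal_lt_top⟩
  have hμne : μ ≠ 0 := by
    intro h0
    rw [h0] at hμuniv
    simp only [Measure.coe_zero, Pi.zero_apply] at hμuniv
    rw [eq_comm, ENNReal.ofReal_eq_zero] at hμuniv
    linarith
  have hbm : Measurable fun x => ‖R₁ x - R₂ x‖ := by
    have h := (hm₁.sub hm₂).norm
    simpa using h
  have hum : Measurable u := (by measurability : Measurable fun y : ℝ => y ^ p).comp hbm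
  have hFm : Measurable fun q : ℝ × ℝ => u q.2 * wfn p (q.1 - α q.2) :=
    (hum.comp measurable_snd).mul ((wfn_measurable p).comp
      (measurable_fst.sub ((measurable_const.mul hθmeas).comp measurable_snd)))
  have hsec : ∀ x : ℝ, Integrable (fun φ => u x * wfn p (φ - α x)) μ := by
    intro x
    have h1 := (wfn_shift hp0 hp1 (α x)).1
    rw [intervalIntegrable_iff_integrableOn_Ioc_of_le hππ] at h1
    exact (h1 : Integrable _ μ).const_mul (u x)
  have hWsec : ∀ x : ℝ, (∫ φ, u x * wfn p (φ - α x) ∂μ) = u x * W := by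
    intro x
    rw [hμ, ← intervalIntegral.integral_of_le hππ,
      intervalIntegral.integral_const_mul, (wfn_shift hp0 hp1 (α x)).2]
  have hprod : Integrable (fun q : ℝ × ℝ => u q.2 * wfn p (q.1 - α q.2)) (μ.prod volume) := by
    rw [MeasureTheory.integrable_prod_iff' hFm.aestronglyMeasurable]
    constructor
    · exact Filter.Eventually.of_forall fun x => hsec x
    · have heq : (fun x => ∫ φ, ‖u x * wfn p (φ - α x)‖ ∂μ) = fun x => u x * W := by
        funext x
        have hnn : ∀ φ : ℝ, ‖u x * wfn p (φ - α x)‖ = u x * wfn p (φ - α x) := fun φ => by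
          rw [Real.norm_eq_abs, abs_of_nonneg (mul_nonneg
            (Real.rpow_nonneg (norm_nonneg _) _) (wfn_nonneg _ _))]
        simp only [hnn]
        exact hWsec x
      rw [heq]
      exact hint.mul_const W
  have hswap : (∫ φ, (∫ x : ℝ, u x * wfn p (φ - α x)) ∂μ) = A * W := by
    have h := MeasureTheory.integral_integral_swap
      (f := fun φ x => u x * wfn p (φ - α x)) (μ := μ) (ν := volume) hprod
    rw [h]
    have : (fun x : ℝ => ∫ φ, u x * wfn p (φ - α x) ∂μ) = fun x => u x * W := funext hWsec
    rw [this]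
    exact integral_mul_const W u
  have hdouble : (∫ φ in (-π)..π, ∫ x : ℝ, u x * wfn p (φ - α x)) = A * W := by
    rw [intervalIntegral.integral_of_le hππ]
    exact hswap
  have hWle : W ≤ 2 ^ (1 - p) * π / (1 - p) := wfn_integral_le hp0 hp1
  constructor
  · rw [hdouble]
    calc A * W ≤ A * (2 ^ (1 - p) * π / (1 - p)) :=
          mul_le_mul_of_nonneg_left hWle hA0
    _ = 2 ^ (1 - p) * π / (1 - p) * A := by ring
  · -- mean value part
    have hh : Integrable (fun φ => ∫ x : ℝ, u x * wfn p (φ - α x)) μ := by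
      have := hprod.integral_prod_left
      exact this
    have hnull : μ (Set.Ioc (-π) π)ᶜ = 0 := by
      rw [hμ, Measure.restrict_apply measurableSet_Ioc.compl, Set.compl_inter_self,
        measure_empty]
    obtain ⟨φ₀, hφ₀N, hφ₀⟩ :=
      MeasureTheory.exists_notMem_null_le_average hμne hh hnull
    have hmem : φ₀ ∈ Set.Ioc (-π) π := Set.not_notMem.mp hφ₀N
    refine ⟨φ₀, ⟨hmem.1.le, hmem.2⟩, ?_⟩
    have havg : (⨍ φ, (∫ x : ℝ, u x * wfn p (φ - α x)) ∂μ)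
        = (2 * π)⁻¹ * (A * W) := by
      rw [MeasureTheory.average_eq, measureReal_def, hμuniv, ENNReal.toReal_ofReal (by positivity), hswap,
        smul_eq_mul]
    rw [havg] at hφ₀
    have e3 : (2 : ℝ) ^ (1 - p) = 2 * 2 ^ (-p) := by
      rw [show (1 : ℝ) - p = 1 + -p by ring, Real.rpow_add (by norm_num), Real.rpow_one]
    have hfinal : (2 * π)⁻¹ * (A * W) ≤ 2 ^ (-p) / (1 - p) * A := by
      have h1 : A * W ≤ A * (2 ^ (1 - p) * π / (1 - p)) :=
        mul_le_mul_of_nonneg_left hWle hA0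
      have h2 : (2 * π)⁻¹ * (A * (2 ^ (1 - p) * π / (1 - p))) = 2 ^ (-p) / (1 - p) * A := by
        have hπne : π ≠ 0 := hπ.ne'
        have h1p : (1 : ℝ) - p ≠ 0 := by linarith
        rw [e3]
        field_simp
      calc (2 * π)⁻¹ * (A * W) ≤ (2 * π)⁻¹ * (A * (2 ^ (1 - p) * π / (1 - p))) := by
            apply mul_le_mul_of_nonneg_left h1 (by positivity)
      _ = 2 ^ (-p) / (1 - p) * A := h2
    exact hφ₀.trans hfinal
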